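/- arXiv:1902.09783 — 2 statements merged into one kernel-verified Lean document; each statement's English description precedes it below -/
import Mathlib

section
/- If the Ω-polarity P = (X, Y, R, S, T) is an inner substructure of the Ω-polarity P′ = (X′, Y′, R′, S′, T′), then the map A ↦ A ∩ X sends stable subsets of X′ (in P′) onto stable subsets of X (in P), is surjective, and is a homomorphism of stable set lattices with operators: it preserves binary intersections, binary joins (A ∨ B = λ_R ρ_R(A ∪ B)), top, bottom, and satisfies (f_{S′}(A₀,…,A_{n−1})) ∩ X = f_S(A₀ ∩ X,…,A_{n−1} ∩ X) and (g_{T′}(A₀,…,A_{m−1})) ∩ X = g_T(A₀ ∩ X,…,A_{m−1} ∩ X) for all tuples of stable subsets of X′. -/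
/-- The right polar `ρ_R A = {y ∈ Y : ∀ x ∈ A, x R y}`. -/
def rpolar {X Y : Type*} (R : X → Y → Prop) (A : Set X) : Set Y := {y | ∀ x ∈ A, R x y}

/-- The left polar `λ_R B = {x ∈ X : ∀ y ∈ B, x R y}`. -/
def lpolar {X Y : Type*} (R : X → Y → Prop) (B : Set Y) : Set X := {x | ∀ y ∈ B, R x y}

/-- `A ⊆ X` is stable if `A = λ_R (ρ_R A)`. -/
def StableX {X Y : Type*} (R : X → Y → Prop) (A : Set X) : Prop := A = lpolar R (rpolar R A)

/-- `B ⊆ Y` is stable if `B = ρ_R (λ_R B)`. -/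
def StableY {X Y : Type*} (R : X → Y → Prop) (B : Set Y) : Prop := B = rpolar R (lpolar R B)

/-- The quasi-order `≤₁` on `X`. -/
def le1 {X Y : Type*} (R : X → Y → Prop) (x x' : X) : Prop := rpolar R {x} ⊆ rpolar R {x'}

/-- The quasi-order `≤₂` on `Y`. -/
def le2 {X Y : Type*} (R : X → Y → Prop) (y y' : Y) : Prop := lpolar R {y} ⊆ lpolar R {y'}

/-- The operator `f_S` induced on stable sets by `S ⊆ Xⁿ × Y`. -/
def fS {X Y : Type*} {n : ℕ} (R : X → Y → Prop) (S : (Fin n → X) → Y → Prop)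
    (A : Fin n → Set X) : Set X :=
  lpolar R {y | ∀ xs : Fin n → X, (∀ i, xs i ∈ A i) → S xs y}

/-- The dual operator `g_T` induced on stable sets by `T ⊆ X × Yᵐ`. -/
def gT {X Y : Type*} {m : ℕ} (R : X → Y → Prop) (T : X → (Fin m → Y) → Prop)
    (A : Fin m → Set X) : Set X :=
  {x | ∀ ys : Fin m → Y, (∀ i, ys i ∈ rpolar R (A i)) → T x ys}

/-- All sections of `S ⊆ Xⁿ × Y` are stable. -/
def SSectionsStable {X Y : Type*} {n : ℕ} (R : X → Y → Prop)
    (S : (Fin n → X) → Y → Prop) : Prop :=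
  (∀ xs : Fin n → X, StableY R {y | S xs y}) ∧
  (∀ (xs : Fin n → X) (i : Fin n) (y : Y), StableX R {x' | S (Function.update xs i x') y})

/-- All sections of `T ⊆ X × Yᵐ` are stable. -/
def TSectionsStable {X Y : Type*} {m : ℕ} (R : X → Y → Prop)
    (T : X → (Fin m → Y) → Prop) : Prop :=
  (∀ ys : Fin m → Y, StableX R {x | T x ys}) ∧
  (∀ (x : X) (ys : Fin m → Y) (i : Fin m), StableY R {y' | T x (Function.update ys i y')})
/-- A bounded morphism between plain polarities. -/
structure IsPolarityMorphism {X Y X' Y' : Type*} (R : X → Y → Prop) (R' : X' → Y' → Prop)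
    (α : X → X') (β : Y → Y') : Prop where
  mono1 : ∀ ⦃x z : X⦄, le1 R x z → le1 R' (α x) (α z)
  mono2 : ∀ ⦃y w : Y⦄, le2 R y w → le2 R' (β y) (β w)
  backR : ∀ ⦃x : X⦄ ⦃y : Y⦄, R' (α x) (β y) → R x y
  forthR1 : ∀ ⦃x' : X'⦄ ⦃y : Y⦄, (∀ x : X, le1 R' x' (α x) → R x y) → R' x' (β y)
  forthR2 : ∀ ⦃x : X⦄ ⦃y' : Y'⦄, (∀ y : Y, le2 R' y' (β y) → R x y) → R' (α x) y'

/-- A bounded morphism between Ω-polarities. -/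
structure IsBddMorphism {X Y X' Y' : Type*} {n m : ℕ}
    (R : X → Y → Prop) (S : (Fin n → X) → Y → Prop) (T : X → (Fin m → Y) → Prop)
    (R' : X' → Y' → Prop) (S' : (Fin n → X') → Y' → Prop) (T' : X' → (Fin m → Y') → Prop)
    (α : X → X') (β : Y → Y') : Prop where
  mono1 : ∀ ⦃x z : X⦄, le1 R x z → le1 R' (α x) (α z)
  mono2 : ∀ ⦃y w : Y⦄, le2 R y w → le2 R' (β y) (β w)
  backR : ∀ ⦃x : X⦄ ⦃y : Y⦄, R' (α x) (β y) → R x y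
  forthR1 : ∀ ⦃x' : X'⦄ ⦃y : Y⦄, (∀ x : X, le1 R' x' (α x) → R x y) → R' x' (β y)
  forthR2 : ∀ ⦃x : X⦄ ⦃y' : Y'⦄, (∀ y : Y, le2 R' y' (β y) → R x y) → R' (α x) y'
  backS : ∀ ⦃xs : Fin n → X⦄ ⦃y : Y⦄, S' (fun i => α (xs i)) (β y) → S xs y
  forthS : ∀ ⦃xs' : Fin n → X'⦄ ⦃y : Y⦄,
    (∀ xs : Fin n → X, (∀ i, le1 R' (xs' i) (α (xs i))) → S xs y) → S' xs' (β y)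
  backT : ∀ ⦃x : X⦄ ⦃ys : Fin m → Y⦄, T' (α x) (fun i => β (ys i)) → T x ys
  forthT : ∀ ⦃x : X⦄ ⦃ys' : Fin m → Y'⦄,
    (∀ ys : Fin m → Y, (∀ i, le2 R' (ys' i) (β (ys i))) → T x ys) → T' (α x) ys'
/-! A bounded morphism `(α, β)` pulls stable sets back to stable sets: stable sets are
upward closed for `≤₁` (and those of `Y` for `≤₂`), which is exactly what the "forth"
conditions need, so `α⁻¹` commutes with both polars and hence with joins, `⊥`, `f_S` and
`g_T`. For an inner substructure `R` is also preserved, so every stable `B ⊆ X` is the trace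
of its closure `λ_{R'} ρ_{R'} B` in `P'`. -/

section Polarity

variable {X Y : Type*} (R : X → Y → Prop)

theorem subset_lpolar_rpolar (A : Set X) : A ⊆ lpolar R (rpolar R A) :=
  fun _ hx _ hy => hy _ hx

theorem subset_rpolar_lpolar (B : Set Y) : B ⊆ rpolar R (lpolar R B) :=
  fun _ hy _ hx => hx _ hy

theorem rpolar_anti {A A' : Set X} (h : A ⊆ A') : rpolar R A' ⊆ rpolar R A :=
  fun _ hy _ hx => hy _ (h hx)

theorem lpolar_anti {B B' : Set Y} (h : B ⊆ B') : lpolar R B' ⊆ lpolar R B :=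
  fun _ hx _ hy => hx _ (h hy)

theorem stableX_lpolar (B : Set Y) : StableX R (lpolar R B) :=
  (subset_lpolar_rpolar R _).antisymm (lpolar_anti R (subset_rpolar_lpolar R B))

theorem stableY_rpolar (A : Set X) : StableY R (rpolar R A) :=
  (subset_rpolar_lpolar R _).antisymm (rpolar_anti R (subset_lpolar_rpolar R A))

theorem stableY_univ : StableY R (Set.univ : Set Y) :=
  (subset_rpolar_lpolar R _).antisymm (Set.subset_univ _)

theorem rpolar_union (A A' : Set X) : rpolar R (A ∪ A') = rpolar R A ∩ rpolar R A' := by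
  ext y
  simp only [rpolar, Set.mem_union, Set.mem_ofPred_eq, Set.mem_inter_iff, or_imp, forall_and]

theorem stableY_setOf_forall {ι : Type*} (p : ι → Prop) (P : ι → Y → Prop)
    (h : ∀ i, StableY R {y | P i y}) : StableY R {y | ∀ i, p i → P i y} := by
  refine (subset_rpolar_lpolar R _).antisymm fun y hy i hi => ?_
  have hsub : {y | ∀ i, p i → P i y} ⊆ {y | P i y} := fun _ hy' => hy' i hi
  have hy' := rpolar_anti R (lpolar_anti R hsub) hy
  rwa [← h i] at hy'

variable {R}

theorem StableX.mem_of_le1 {A : Set X} (hA : StableX R A) {x z : X} (hx : x ∈ A)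
    (hxz : le1 R x z) : z ∈ A := by
  rw [hA]
  exact fun y hy => hxz (rpolar_anti R (Set.singleton_subset_iff.mpr hx) hy) z rfl

theorem StableY.mem_of_le2 {B : Set Y} (hB : StableY R B) {y w : Y} (hy : y ∈ B)
    (hyw : le2 R y w) : w ∈ B := by
  rw [hB]
  exact fun x hx => hyw (lpolar_anti R (Set.singleton_subset_iff.mpr hy) hx) w rfl

end Polarity

section Morphism

variable {X Y X' Y' : Type*} {R : X → Y → Prop} {R' : X' → Y' → Prop} {α : X → X'}
  {β : Y → Y'}

namespace IsPolarityMorphism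

variable (h : IsPolarityMorphism R R' α β)
include h

theorem rpolar_preimage {A : Set X'} (hA : StableX R' A) :
    rpolar R (α ⁻¹' A) = β ⁻¹' rpolar R' A := by
  ext y
  exact ⟨fun hy x' hx' => h.forthR1 fun x hx => hy x (hA.mem_of_le1 hx' hx),
    fun hy x hx => h.backR (hy (α x) hx)⟩

theorem lpolar_preimage {B : Set Y'} (hB : StableY R' B) :
    lpolar R (β ⁻¹' B) = α ⁻¹' lpolar R' B := by
  ext x
  exact ⟨fun hx y' hy' => h.forthR2 fun y hy => hx y (hB.mem_of_le2 hy' hy),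
    fun hx y hy => h.backR (hx (β y) hy)⟩

theorem stableX_preimage {A : Set X'} (hA : StableX R' A) : StableX R (α ⁻¹' A) := by
  rw [StableX, h.rpolar_preimage hA, h.lpolar_preimage (stableY_rpolar R' A), ← hA]

theorem preimage_join {A A' : Set X'} (hA : StableX R' A) (hA' : StableX R' A') :
    α ⁻¹' lpolar R' (rpolar R' (A ∪ A')) =
      lpolar R (rpolar R (α ⁻¹' A ∪ α ⁻¹' A')) := by
  rw [← h.lpolar_preimage (stableY_rpolar R' _), rpolar_union, rpolar_union,
    Set.preimage_inter, h.rpolar_preimage hA, h.rpolar_preimage hA']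

theorem preimage_bot : α ⁻¹' lpolar R' Set.univ = lpolar R Set.univ := by
  rw [← h.lpolar_preimage (stableY_univ R'), Set.preimage_univ]

end IsPolarityMorphism

namespace IsBddMorphism

variable {n m : ℕ} {S : (Fin n → X) → Y → Prop} {T : X → (Fin m → Y) → Prop}
  {S' : (Fin n → X') → Y' → Prop} {T' : X' → (Fin m → Y') → Prop}
  (h : IsBddMorphism R S T R' S' T' α β)
include h

theorem toIsPolarityMorphism : IsPolarityMorphism R R' α β :=
  ⟨h.mono1, h.mono2, h.backR, h.forthR1, h.forthR2⟩

theorem preimage_fS (hS' : SSectionsStable R' S') {A : Fin n → Set X'}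
    (hA : ∀ i, StableX R' (A i)) :
    α ⁻¹' fS R' S' A = fS R S fun i => α ⁻¹' A i := by
  have hC : β ⁻¹' {y' | ∀ xs', (∀ i, xs' i ∈ A i) → S' xs' y'} =
      {y | ∀ xs, (∀ i, α (xs i) ∈ A i) → S xs y} := by
    ext y
    exact ⟨fun hy xs hxs => h.backS (hy _ hxs),
      fun hy xs' hxs' => h.forthS fun xs hle =>
        hy xs fun i => (hA i).mem_of_le1 (hxs' i) (hle i)⟩
  rw [fS, fS, ← h.toIsPolarityMorphism.lpolar_preimage (stableY_setOf_forall R' _ _ hS'.1),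
    hC]
  rfl

theorem preimage_gT {A : Fin m → Set X'} (hA : ∀ i, StableX R' (A i)) :
    α ⁻¹' gT R' T' A = gT R T fun i => α ⁻¹' A i := by
  ext x
  simp only [gT, Set.mem_preimage, Set.mem_ofPred_eq,
    h.toIsPolarityMorphism.rpolar_preimage (hA _)]
  exact ⟨fun hx ys hys => h.backT (hx _ hys), fun hx ys' hys' => h.forthT fun ys hle =>
    hx ys fun i => (stableY_rpolar R' (A i)).mem_of_le2 (hys' i) (hle i)⟩

end IsBddMorphism

theorem exists_stableX_preimage_eq (hR : ∀ x y, R x y ↔ R' (α x) (β y)) {B : Set X}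
    (hB : StableX R B) : ∃ A : Set X', StableX R' A ∧ α ⁻¹' A = B := by
  refine ⟨lpolar R' (rpolar R' (α '' B)), stableX_lpolar R' _,
    Set.Subset.antisymm (fun x hx => ?_) fun x hx => subset_lpolar_rpolar R' _ ⟨x, hx, rfl⟩⟩
  rw [hB]
  refine fun y hy => (hR x y).mpr (hx (β y) ?_)
  rintro _ ⟨b, hb, rfl⟩
  exact (hR b y).mp (hy b hb)

end Morphism

theorem stmt11_general {X' Y' : Type*} {n m : ℕ}
    (R' : X' → Y' → Prop) (S' : (Fin n → X') → Y' → Prop) (T' : X' → (Fin m → Y') → Prop)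
    (hS' : SSectionsStable R' S')
    (Xs : Set X') (Ys : Set Y')
    -- the relations of `P` are the restrictions of those of `P'`
    (R : ↥Xs → ↥Ys → Prop) (S : (Fin n → ↥Xs) → ↥Ys → Prop) (T : ↥Xs → (Fin m → ↥Ys) → Prop)
    (hR : ∀ (x : ↥Xs) (y : ↥Ys), R x y ↔ R' x.val y.val)
    -- the inclusions form a bounded morphism (P is an inner substructure of P')
    (hincl : IsBddMorphism R S T R' S' T'
      (Subtype.val : ↥Xs → X') (Subtype.val : ↥Ys → Y')) :
    -- the map sends stable sets to stable sets
    (∀ A : Set X', StableX R' A → StableX R (Subtype.val ⁻¹' A)) ∧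
    -- it is surjective onto the stable sets of `P`
    (∀ B : Set ↥Xs, StableX R B →
      ∃ A : Set X', StableX R' A ∧ Subtype.val ⁻¹' A = B) ∧
    -- it preserves binary meets
    (∀ A B : Set X', StableX R' A → StableX R' B →
      (Subtype.val ⁻¹' (A ∩ B) : Set ↥Xs) = Subtype.val ⁻¹' A ∩ Subtype.val ⁻¹' B) ∧
    -- it preserves binary joins `A ∨ B = λ_R ρ_R (A ∪ B)`
    (∀ A B : Set X', StableX R' A → StableX R' B →
      (Subtype.val ⁻¹' (lpolar R' (rpolar R' (A ∪ B))) : Set ↥Xs) =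
        lpolar R (rpolar R (Subtype.val ⁻¹' A ∪ Subtype.val ⁻¹' B))) ∧
    -- it preserves top
    ((Subtype.val ⁻¹' (Set.univ : Set X') : Set ↥Xs) = Set.univ) ∧
    -- it preserves bottom
    ((Subtype.val ⁻¹' (lpolar R' (Set.univ : Set Y')) : Set ↥Xs) =
      lpolar R (Set.univ : Set ↥Ys)) ∧
    -- it preserves the operators
    (∀ A : Fin n → Set X', (∀ i, StableX R' (A i)) →
      (Subtype.val ⁻¹' (fS R' S' A) : Set ↥Xs) = fS R S (fun i => Subtype.val ⁻¹' (A i))) ∧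
    (∀ A : Fin m → Set X', (∀ i, StableX R' (A i)) →
      (Subtype.val ⁻¹' (gT R' T' A) : Set ↥Xs) = gT R T (fun i => Subtype.val ⁻¹' (A i))) := by
  have hpol := hincl.toIsPolarityMorphism
  exact ⟨fun A hA => hpol.stableX_preimage hA,
    fun B hB => exists_stableX_preimage_eq hR hB,
    fun A B _ _ => Set.preimage_inter,
    fun A B hA hB => hpol.preimage_join hA hB,
    Set.preimage_univ,
    hpol.preimage_bot,
    fun A hA => hincl.preimage_fS hS' hA,
    fun A hA => hincl.preimage_gT hA⟩

/-- If the Ω-polarity `P` (carried by subsets `Xs ⊆ X'`, `Ys ⊆ Y'` with the restricted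
relations) is an inner substructure of the Ω-polarity `P'`, then `A ↦ A ∩ X` (here the
preimage under the inclusion) is a surjective homomorphism from the stable set lattice of
`P'` onto that of `P`, preserving binary meets, binary joins, top, bottom and the
operators `f` and `g`. -/
theorem stmt11 {X' Y' : Type*} {n m : ℕ}
    (R' : X' → Y' → Prop) (S' : (Fin n → X') → Y' → Prop) (T' : X' → (Fin m → Y') → Prop)
    (hS' : SSectionsStable R' S') (hT' : TSectionsStable R' T')
    (Xs : Set X') (Ys : Set Y')
    -- the relations of `P` are the restrictions of those of `P'`
    (R : ↥Xs → ↥Ys → Prop) (S : (Fin n → ↥Xs) → ↥Ys → Prop) (T : ↥Xs → (Fin m → ↥Ys) → Prop)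
    (hR : ∀ (x : ↥Xs) (y : ↥Ys), R x y ↔ R' x.val y.val)
    (hSr : ∀ (xs : Fin n → ↥Xs) (y : ↥Ys), S xs y ↔ S' (fun i => (xs i).val) y.val)
    (hTr : ∀ (x : ↥Xs) (ys : Fin m → ↥Ys), T x ys ↔ T' x.val (fun i => (ys i).val))
    -- `P` is an Ω-polarity
    (hS : SSectionsStable R S) (hT : TSectionsStable R T)
    -- the inclusions form a bounded morphism (P is an inner substructure of P')
    (hincl : IsBddMorphism R S T R' S' T'
      (Subtype.val : ↥Xs → X') (Subtype.val : ↥Ys → Y')) :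
    -- the map sends stable sets to stable sets
    (∀ A : Set X', StableX R' A → StableX R (Subtype.val ⁻¹' A)) ∧
    -- it is surjective onto the stable sets of `P`
    (∀ B : Set ↥Xs, StableX R B →
      ∃ A : Set X', StableX R' A ∧ Subtype.val ⁻¹' A = B) ∧
    -- it preserves binary meets
    (∀ A B : Set X', StableX R' A → StableX R' B →
      (Subtype.val ⁻¹' (A ∩ B) : Set ↥Xs) = Subtype.val ⁻¹' A ∩ Subtype.val ⁻¹' B) ∧
    -- it preserves binary joins `A ∨ B = λ_R ρ_R (A ∪ B)`
    (∀ A B : Set X', StableX R' A → StableX R' B →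
      (Subtype.val ⁻¹' (lpolar R' (rpolar R' (A ∪ B))) : Set ↥Xs) =
        lpolar R (rpolar R (Subtype.val ⁻¹' A ∪ Subtype.val ⁻¹' B))) ∧
    -- it preserves top
    ((Subtype.val ⁻¹' (Set.univ : Set X') : Set ↥Xs) = Set.univ) ∧
    -- it preserves bottom
    ((Subtype.val ⁻¹' (lpolar R' (Set.univ : Set Y')) : Set ↥Xs) =
      lpolar R (Set.univ : Set ↥Ys)) ∧
    -- it preserves the operators
    (∀ A : Fin n → Set X', (∀ i, StableX R' (A i)) →
      (Subtype.val ⁻¹' (fS R' S' A) : Set ↥Xs) = fS R S (fun i => Subtype.val ⁻¹' (A i))) ∧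
    (∀ A : Fin m → Set X', (∀ i, StableX R' (A i)) →
      (Subtype.val ⁻¹' (gT R' T' A) : Set ↥Xs) = gT R T (fun i => Subtype.val ⁻¹' (A i))) :=
  stmt11_general R' S' T' hS' Xs Ys R S T hR hincl
end

section
/- Let L and M be bounded lattices equipped with normal operators f_L : Lⁿ → L, f_M : Mⁿ → M and normal dual operators g_L : Lᵐ → L, g_M : Mᵐ → M, and let θ : L → M preserve 0, 1, binary meets and binary joins and satisfy θ(f_L(a⃗)) = f_M(θ(a₀),…,θ(a_{n−1})) and θ(g_L(a⃗)) = g_M(θ(a₀),…,θ(a_{m−1})) for all tuples a⃗. Then θ⁻¹ maps nonempty filters (ideals) of M to nonempty filters (ideals) of L, and the pair θ₊ = (α_θ, β_θ), where α_θ(F) = θ⁻¹F and β_θ(D) = θ⁻¹D, is a bounded morphism from the canonical structure M₊ = (𝓕_M, 𝓘_M, ⋔, S_M, T_M) to L₊ = (𝓕_L, 𝓘_L, ⋔, S_L, T_L). Moreover: if θ is injective then α_θ and β_θ are surjective; if θ is surjective then α_θ and β_θ are injective and θ₊ preserves the relations ⋔, S_M and T_M, hence θ₊ is an isomorphism from M₊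 onto the inner substructure im(θ₊) of L₊. -/
/-- A nonempty lattice filter: nonempty, upward closed, closed under binary meets. -/
def IsLatFilter {L : Type*} [Lattice L] (F : Set L) : Prop :=
  F.Nonempty ∧ (∀ ⦃a b : L⦄, a ∈ F → a ≤ b → b ∈ F) ∧ (∀ ⦃a b : L⦄, a ∈ F → b ∈ F → a ⊓ b ∈ F)

/-- A nonempty lattice ideal: nonempty, downward closed, closed under binary joins. -/
def IsLatIdeal {L : Type*} [Lattice L] (D : Set L) : Prop :=
  D.Nonempty ∧ (∀ ⦃a b : L⦄, a ∈ D → b ≤ a → b ∈ D) ∧ (∀ ⦃a b : L⦄, a ∈ D → b ∈ D → a ⊔ b ∈ D)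

/-- The set `𝓕_L` of nonempty filters of `L`. -/
abbrev Filt (L : Type*) [Lattice L] := {F : Set L // IsLatFilter F}

/-- The set `𝓘_L` of nonempty ideals of `L`. -/
abbrev Idl (L : Type*) [Lattice L] := {D : Set L // IsLatIdeal D}

/-- The canonical polarity relation: `F ⋔ D` iff `F ∩ D ≠ ∅`. -/
def canR {L : Type*} [Lattice L] (F : Filt L) (D : Idl L) : Prop := (F.val ∩ D.val).Nonempty
/-- The polarity relation of the image structure `im(α, β)`, on the images of `α` and `β`. -/
def imR {X Y X' Y' : Type*} (R' : X' → Y' → Prop) (α : X → X') (β : Y → Y') :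
    ↥(Set.range α) → ↥(Set.range β) → Prop :=
  fun x y => R' x.val y.val

/-- The `S`-relation of the image structure `im(α, β)`. -/
def imS {X Y X' Y' : Type*} {n : ℕ} (S' : (Fin n → X') → Y' → Prop)
    (α : X → X') (β : Y → Y') :
    (Fin n → ↥(Set.range α)) → ↥(Set.range β) → Prop :=
  fun xs y => S' (fun i => (xs i).val) y.val

/-- The `T`-relation of the image structure `im(α, β)`. -/
def imT {X Y X' Y' : Type*} {m : ℕ} (T' : X' → (Fin m → Y') → Prop)
    (α : X → X') (β : Y → Y') :
    ↥(Set.range α) → (Fin m → ↥(Set.range β)) → Prop :=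
  fun x ys => T' x.val (fun i => (ys i).val)
/-- The canonical relation `S_L` on filters/ideals determined by an operator `f`. -/
def SL {L : Type*} [Lattice L] {n : ℕ} (f : (Fin n → L) → L) :
    (Fin n → Filt L) → Idl L → Prop :=
  fun Fs D => ∃ a : Fin n → L, (∀ i, a i ∈ (Fs i).val) ∧ f a ∈ D.val

/-- The canonical relation `T_L` on filters/ideals determined by a dual operator `g`. -/
def TL {L : Type*} [Lattice L] {m : ℕ} (g : (Fin m → L) → L) :
    Filt L → (Fin m → Idl L) → Prop :=
  fun F Ds => ∃ a : Fin m → L, (∀ i, a i ∈ (Ds i).val) ∧ g a ∈ F.val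

/-!
The back conditions hold because `θ` maps a common element of `θ⁻¹F` and `θ⁻¹D` into `F ∩ D`
and commutes with the operators.
The forth conditions are witnessed by pushing forward: a filter `G` of `L` lies inside the
pull-back of the upward closure of `θ[G]` (dually for ideals), and because `f_M`, `g_M` are
monotone, an `S`- or `T`-instance between these closures pulls back to one between the original
filters and ideals. When `θ` is injective, pulling back the closure of `θ[G]` returns `G`. When
`θ` is surjective, `θ⁻¹` is injective and the relations are preserved as well as reflected; a
bijection that preserves and reflects all relations is a bounded morphism in both directions.
-/

open Function

theorem monotone_of_monotone_update {ι α β : Type*} [Fintype ι] [DecidableEq ι] [Preorder α]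
    [Preorder β] {f : (ι → α) → β} (hf : ∀ i a, Monotone fun x => f (update a i x)) :
    Monotone f := by
  intro c d hcd
  suffices ∀ s : Finset ι, f c ≤ f (s.piecewise d c) by simpa using this Finset.univ
  intro s
  induction s using Finset.induction_on with
  | empty => simp
  | insert j s hj ih =>
    calc f c ≤ f (s.piecewise d c) := ih
      _ = f (update (s.piecewise d c) j (c j)) := by
        rw [← Finset.piecewise_eq_of_notMem s d c hj, update_eq_self]
      _ ≤ f (update (s.piecewise d c) j (d j)) := hf j _ (hcd j)
      _ = f ((insert j s).piecewise d c) := by rw [Finset.piecewise_insert]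

theorem monotone_of_map_update_sup {ι α β : Type*} [Fintype ι] [DecidableEq ι]
    [SemilatticeSup α] [SemilatticeSup β] {f : (ι → α) → β}
    (hf : ∀ i a (b c : α), f (update a i (b ⊔ c)) = f (update a i b) ⊔ f (update a i c)) :
    Monotone f :=
  monotone_of_monotone_update fun i a b c hbc => by
    have h := hf i a b c
    rw [sup_eq_right.mpr hbc] at h
    exact le_sup_left.trans_eq h.symm

theorem monotone_of_map_update_inf {ι α β : Type*} [Fintype ι] [DecidableEq ι]
    [SemilatticeInf α] [SemilatticeInf β] {f : (ι → α) → β}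
    (hf : ∀ i a (b c : α), f (update a i (b ⊓ c)) = f (update a i b) ⊓ f (update a i c)) :
    Monotone f :=
  monotone_of_monotone_update fun i a b c hbc => by
    have h := hf i a b c
    rw [inf_eq_left.mpr hbc] at h
    exact h.trans_le inf_le_right

section Polarity

variable {X Y X' Y' : Type*} {n m : ℕ} {R : X → Y → Prop} {S : (Fin n → X) → Y → Prop}
  {T : X → (Fin m → Y) → Prop} {R' : X' → Y' → Prop} {S' : (Fin n → X') → Y' → Prop}
  {T' : X' → (Fin m → Y') → Prop} {α : X → X'} {β : Y → Y'}

theorem le1_iff {x z : X} : le1 R x z ↔ ∀ y, R x y → R z y := by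
  simp [le1, rpolar, Set.subset_def]

theorem le2_iff {y w : Y} : le2 R y w ↔ ∀ x, R x y → R x w := by
  simp [le2, lpolar, Set.subset_def]

theorem le1_refl (x : X) : le1 R x x := subset_rfl

theorem le2_refl (y : Y) : le2 R y y := subset_rfl

theorem isBddMorphism_of_surjective (hα : Surjective α) (hβ : Surjective β)
    (hR : ∀ x y, R' (α x) (β y) ↔ R x y)
    (hS : ∀ xs y, S' (fun i => α (xs i)) (β y) ↔ S xs y)
    (hT : ∀ x ys, T' (α x) (fun i => β (ys i)) ↔ T x ys) :
    IsBddMorphism R S T R' S' T' α β where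
  mono1 x z h := le1_iff.mpr <| hβ.forall.mpr fun y hy =>
    (hR z y).mpr (le1_iff.mp h y ((hR x y).mp hy))
  mono2 y w h := le2_iff.mpr <| hα.forall.mpr fun x hx =>
    (hR x w).mpr (le2_iff.mp h x ((hR x y).mp hx))
  backR x y := (hR x y).mp
  forthR1 := hα.forall.mpr fun x y h => (hR x y).mpr (h x (le1_refl _))
  forthR2 x := hβ.forall.mpr fun y h => (hR x y).mpr (h y (le2_refl _))
  backS xs y := (hS xs y).mp
  forthS := (hα.comp_left).forall.mpr fun xs y h => (hS xs y).mpr (h xs fun _ => le1_refl _)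
  backT x ys := (hT x ys).mp
  forthT x := (hβ.comp_left).forall.mpr fun ys h => (hT x ys).mpr (h ys fun _ => le2_refl _)

variable (hR : ∀ x y, R' (α x) (β y) ↔ R x y)
  (hS : ∀ xs y, S' (fun i => α (xs i)) (β y) ↔ S xs y)
  (hT : ∀ x ys, T' (α x) (fun i => β (ys i)) ↔ T x ys)
include hR hS hT

theorem isBddMorphism_rangeFactorization :
    IsBddMorphism R S T (imR R' α β) (imS S' α β) (imT T' α β)
      (Set.rangeFactorization α) (Set.rangeFactorization β) :=
  isBddMorphism_of_surjective Set.rangeFactorization_surjective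
    Set.rangeFactorization_surjective hR hS hT

theorem isBddMorphism_rangeSplitting (hα : Injective α) (hβ : Injective β) :
    IsBddMorphism (imR R' α β) (imS S' α β) (imT T' α β) R S T
      (Set.rangeSplitting α) (Set.rangeSplitting β) := by
  refine isBddMorphism_of_surjective (Set.rightInverse_rangeSplitting hα).surjective
    (Set.rightInverse_rangeSplitting hβ).surjective (fun x y => ?_) (fun xs y => ?_)
    (fun x ys => ?_)
  · simpa only [imR, Set.apply_rangeSplitting] using
      (hR (Set.rangeSplitting α x) (Set.rangeSplitting β y)).symm
  · simpa only [imS, Set.apply_rangeSplitting] using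
      (hS (fun i => Set.rangeSplitting α (xs i)) (Set.rangeSplitting β y)).symm
  · simpa only [imT, Set.apply_rangeSplitting] using
      (hT (Set.rangeSplitting α x) (fun i => Set.rangeSplitting β (ys i))).symm

end Polarity

section Canonical

variable {K : Type*} [Lattice K]

theorem le1_canR_of_subset {F G : Filt K} (h : F.val ⊆ G.val) : le1 canR F G :=
  le1_iff.mpr fun _ ⟨a, haF, haD⟩ => ⟨a, h haF, haD⟩

theorem le2_canR_of_subset {D E : Idl K} (h : D.val ⊆ E.val) : le2 canR D E :=
  le2_iff.mpr fun _ ⟨a, haF, haD⟩ => ⟨a, haF, h haD⟩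

end Canonical

section Pullback

variable {L M F : Type*} [Lattice L] [Lattice M] [FunLike F L M]

section Filters

theorem IsLatFilter.preimage [OrderTop L] [OrderTop M] [InfTopHomClass F L M] (θ : F)
    {G : Set M} (hG : IsLatFilter G) : IsLatFilter (θ ⁻¹' G) := by
  obtain ⟨⟨b, hb⟩, hup, hinf⟩ := hG
  refine ⟨⟨⊤, ?_⟩, fun _ _ ha hac => hup ha (OrderHomClass.mono θ hac), fun a c ha hc => ?_⟩
  · simpa only [Set.mem_preimage, map_top] using hup hb le_top
  · simpa only [Set.mem_preimage, map_inf] using hinf ha hc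

theorem IsLatFilter.upperClosure_image [InfHomClass F L M] (θ : F) {G : Set L}
    (hG : IsLatFilter G) : IsLatFilter {b | ∃ a ∈ G, θ a ≤ b} := by
  obtain ⟨⟨a, ha⟩, -, hinf⟩ := hG
  refine ⟨⟨θ a, a, ha, le_rfl⟩, ?_, ?_⟩
  · rintro b c ⟨a, ha, hab⟩ hbc
    exact ⟨a, ha, hab.trans hbc⟩
  · rintro b c ⟨a, ha, hab⟩ ⟨a', ha', hac⟩
    exact ⟨a ⊓ a', hinf ha ha', (map_inf θ a a').trans_le (inf_le_inf hab hac)⟩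

def Filt.comap [OrderTop L] [OrderTop M] [InfTopHomClass F L M] (θ : F) (G : Filt M) :
    Filt L :=
  ⟨θ ⁻¹' G.val, G.2.preimage θ⟩

def Filt.map [InfHomClass F L M] (θ : F) (G : Filt L) : Filt M :=
  ⟨{b | ∃ a ∈ G.val, θ a ≤ b}, G.2.upperClosure_image θ⟩

variable [OrderTop L] [OrderTop M] [InfTopHomClass F L M] (θ : F)

theorem Filt.subset_comap_map (G : Filt L) : G.val ⊆ (Filt.comap θ (Filt.map θ G)).val :=
  fun a ha => ⟨a, ha, le_rfl⟩

theorem Filt.comap_map_of_injective (hθ : Injective θ) (G : Filt L) :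
    Filt.comap θ (Filt.map θ G) = G :=
  Subtype.ext <| Set.Subset.antisymm
    (fun _ ⟨_, ha, hle⟩ => G.2.2.1 ha <| by
      rwa [← inf_eq_left, ← hθ.eq_iff, map_inf, inf_eq_left])
    (Filt.subset_comap_map θ G)

theorem Filt.comap_surjective (hθ : Injective θ) : Surjective (Filt.comap θ) :=
  fun G => ⟨_, Filt.comap_map_of_injective θ hθ G⟩

theorem Filt.comap_injective (hθ : Surjective θ) : Injective (Filt.comap θ) :=
  fun _ _ h => Subtype.ext <| Set.preimage_injective.mpr hθ (congrArg Subtype.val h)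

end Filters

section Ideals

theorem IsLatIdeal.preimage [OrderBot L] [OrderBot M] [SupBotHomClass F L M] (θ : F)
    {D : Set M} (hD : IsLatIdeal D) : IsLatIdeal (θ ⁻¹' D) := by
  obtain ⟨⟨b, hb⟩, hdown, hsup⟩ := hD
  refine ⟨⟨⊥, ?_⟩, fun _ _ ha hca => hdown ha (OrderHomClass.mono θ hca), fun a c ha hc => ?_⟩
  · simpa only [Set.mem_preimage, map_bot] using hdown hb bot_le
  · simpa only [Set.mem_preimage, map_sup] using hsup ha hc

theorem IsLatIdeal.lowerClosure_image [SupHomClass F L M] (θ : F) {D : Set L}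
    (hD : IsLatIdeal D) : IsLatIdeal {b | ∃ a ∈ D, b ≤ θ a} := by
  obtain ⟨⟨a, ha⟩, -, hsup⟩ := hD
  refine ⟨⟨θ a, a, ha, le_rfl⟩, ?_, ?_⟩
  · rintro b c ⟨a, ha, hba⟩ hcb
    exact ⟨a, ha, hcb.trans hba⟩
  · rintro b c ⟨a, ha, hba⟩ ⟨a', ha', hca⟩
    exact ⟨a ⊔ a', hsup ha ha', (sup_le_sup hba hca).trans_eq (map_sup θ a a').symm⟩

def Idl.comap [OrderBot L] [OrderBot M] [SupBotHomClass F L M] (θ : F) (D : Idl M) : Idl L :=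
  ⟨θ ⁻¹' D.val, D.2.preimage θ⟩

def Idl.map [SupHomClass F L M] (θ : F) (D : Idl L) : Idl M :=
  ⟨{b | ∃ a ∈ D.val, b ≤ θ a}, D.2.lowerClosure_image θ⟩

variable [OrderBot L] [OrderBot M] [SupBotHomClass F L M] (θ : F)

theorem Idl.subset_comap_map (D : Idl L) : D.val ⊆ (Idl.comap θ (Idl.map θ D)).val :=
  fun a ha => ⟨a, ha, le_rfl⟩

theorem Idl.comap_map_of_injective (hθ : Injective θ) (D : Idl L) :
    Idl.comap θ (Idl.map θ D) = D :=
  Subtype.ext <| Set.Subset.antisymm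
    (fun _ ⟨_, ha, hle⟩ => D.2.2.1 ha <| by
      rwa [← sup_eq_right, ← hθ.eq_iff, map_sup, sup_eq_right])
    (Idl.subset_comap_map θ D)

theorem Idl.comap_surjective (hθ : Injective θ) : Surjective (Idl.comap θ) :=
  fun D => ⟨_, Idl.comap_map_of_injective θ hθ D⟩

theorem Idl.comap_injective (hθ : Surjective θ) : Injective (Idl.comap θ) :=
  fun _ _ h => Subtype.ext <| Set.preimage_injective.mpr hθ (congrArg Subtype.val h)

end Ideals

end Pullback

section CanonicalStructure

variable {L M F : Type*} [Lattice L] [BoundedOrder L] [Lattice M] [BoundedOrder M]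
  [FunLike F L M] [BoundedLatticeHomClass F L M] (θ : F) {n m : ℕ}
  {fL : (Fin n → L) → L} {fM : (Fin n → M) → M}
  {gL : (Fin m → L) → L} {gM : (Fin m → M) → M}

theorem canR_of_canR_comap {G : Filt M} {D : Idl M}
    (h : canR (Filt.comap θ G) (Idl.comap θ D)) : canR G D :=
  let ⟨a, haG, haD⟩ := h
  ⟨θ a, haG, haD⟩

theorem canR_comap_iff (hθ : Surjective θ) (G : Filt M) (D : Idl M) :
    canR (Filt.comap θ G) (Idl.comap θ D) ↔ canR G D := by
  refine ⟨canR_of_canR_comap θ, fun ⟨b, hbG, hbD⟩ => ?_⟩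
  obtain ⟨a, rfl⟩ := hθ b
  exact ⟨a, hbG, hbD⟩

theorem canR_comap_iff_canR_map {G : Filt M} {E : Idl L} :
    canR (Filt.comap θ G) E ↔ canR G (Idl.map θ E) :=
  ⟨fun ⟨a, haG, haE⟩ => ⟨θ a, haG, a, haE, le_rfl⟩,
    fun ⟨_, hbG, a, haE, hba⟩ => ⟨a, G.2.2.1 hbG hba, haE⟩⟩

theorem canR_map_iff_canR_comap {G : Filt L} {D : Idl M} :
    canR (Filt.map θ G) D ↔ canR G (Idl.comap θ D) :=
  ⟨fun ⟨_, ⟨a, haG, hab⟩, hbD⟩ => ⟨a, haG, D.2.2.1 hbD hab⟩,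
    fun ⟨a, haG, haD⟩ => ⟨θ a, ⟨a, haG, le_rfl⟩, haD⟩⟩

section Operator

variable (hf : ∀ a, θ (fL a) = fM fun i => θ (a i))
include hf

theorem SL_of_SL_comap {Gs : Fin n → Filt M} {D : Idl M}
    (h : SL fL (fun i => Filt.comap θ (Gs i)) (Idl.comap θ D)) : SL fM Gs D := by
  obtain ⟨a, haG, haD⟩ := h
  refine ⟨fun i => θ (a i), haG, ?_⟩
  rw [← hf]
  exact haD

theorem SL_comap_iff (hθ : Surjective θ) (Gs : Fin n → Filt M) (D : Idl M) :
    SL fL (fun i => Filt.comap θ (Gs i)) (Idl.comap θ D) ↔ SL fM Gs D := by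
  refine ⟨SL_of_SL_comap θ hf, fun ⟨b, hbG, hbD⟩ => ?_⟩
  obtain ⟨a, rfl⟩ := hθ.comp_left b
  refine ⟨a, hbG, ?_⟩
  show θ (fL a) ∈ D.val
  rwa [hf]

theorem SL_comap_of_SL_map (hfM : Monotone fM) {Gs : Fin n → Filt L} {D : Idl M}
    (h : SL fM (fun i => Filt.map θ (Gs i)) D) : SL fL Gs (Idl.comap θ D) := by
  obtain ⟨b, hbG, hbD⟩ := h
  choose a haG hab using hbG
  exact ⟨a, haG, D.2.2.1 hbD ((hf a).trans_le (hfM hab))⟩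

end Operator

section DualOperator

variable (hg : ∀ a, θ (gL a) = gM fun i => θ (a i))
include hg

theorem TL_of_TL_comap {G : Filt M} {Ds : Fin m → Idl M}
    (h : TL gL (Filt.comap θ G) (fun i => Idl.comap θ (Ds i))) : TL gM G Ds := by
  obtain ⟨a, haD, haG⟩ := h
  refine ⟨fun i => θ (a i), haD, ?_⟩
  rw [← hg]
  exact haG

theorem TL_comap_iff (hθ : Surjective θ) (G : Filt M) (Ds : Fin m → Idl M) :
    TL gL (Filt.comap θ G) (fun i => Idl.comap θ (Ds i)) ↔ TL gM G Ds := by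
  refine ⟨TL_of_TL_comap θ hg, fun ⟨b, hbD, hbG⟩ => ?_⟩
  obtain ⟨a, rfl⟩ := hθ.comp_left b
  refine ⟨a, hbD, ?_⟩
  show θ (gL a) ∈ G.val
  rwa [hg]

theorem TL_comap_of_TL_map (hgM : Monotone gM) {G : Filt M} {Es : Fin m → Idl L}
    (h : TL gM G (fun i => Idl.map θ (Es i))) : TL gL (Filt.comap θ G) Es := by
  obtain ⟨b, hbE, hbG⟩ := h
  choose a haE hba using hbE
  exact ⟨a, haE, G.2.2.1 hbG ((hgM hba).trans_eq (hg a).symm)⟩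

end DualOperator

theorem isBddMorphism_comap (hfM : Monotone fM) (hgM : Monotone gM)
    (hf : ∀ a, θ (fL a) = fM fun i => θ (a i)) (hg : ∀ a, θ (gL a) = gM fun i => θ (a i)) :
    IsBddMorphism canR (SL fM) (TL gM) canR (SL fL) (TL gL) (Filt.comap θ) (Idl.comap θ) where
  mono1 _ _ h := le1_iff.mpr fun _ hE => (canR_comap_iff_canR_map θ).mpr <|
    le1_iff.mp h _ ((canR_comap_iff_canR_map θ).mp hE)
  mono2 _ _ h := le2_iff.mpr fun _ hG => (canR_map_iff_canR_comap θ).mp <|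
    le2_iff.mp h _ ((canR_map_iff_canR_comap θ).mpr hG)
  backR _ _ := canR_of_canR_comap θ
  forthR1 G _ h := (canR_map_iff_canR_comap θ).mp <|
    h _ (le1_canR_of_subset (Filt.subset_comap_map θ G))
  forthR2 _ E h := (canR_comap_iff_canR_map θ).mpr <|
    h _ (le2_canR_of_subset (Idl.subset_comap_map θ E))
  backS _ _ := SL_of_SL_comap θ hf
  forthS Gs _ h := SL_comap_of_SL_map θ hf hfM <|
    h _ fun i => le1_canR_of_subset (Filt.subset_comap_map θ (Gs i))
  backT _ _ := TL_of_TL_comap θ hg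
  forthT _ Es h := TL_comap_of_TL_map θ hg hgM <|
    h _ fun i => le2_canR_of_subset (Idl.subset_comap_map θ (Es i))

end CanonicalStructure

theorem stmt17_general {L M : Type*} [Lattice L] [BoundedOrder L] [Lattice M] [BoundedOrder M]
    {n m : ℕ}
    (fL : (Fin n → L) → L) (fM : (Fin n → M) → M)
    (gL : (Fin m → L) → L) (gM : (Fin m → M) → M)
    -- normal operators
    (hfM_join : ∀ (i : Fin n) (a : Fin n → M) (b c : M),
      fM (Function.update a i (b ⊔ c)) =
        fM (Function.update a i b) ⊔ fM (Function.update a i c))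
    -- normal dual operators
    (hgM_meet : ∀ (i : Fin m) (a : Fin m → M) (b c : M),
      gM (Function.update a i (b ⊓ c)) =
        gM (Function.update a i b) ⊓ gM (Function.update a i c))
    -- `θ` is a homomorphism of bounded lattices with operators
    (θ : L → M) (hbot : θ ⊥ = ⊥) (htop : θ ⊤ = ⊤)
    (hinf : ∀ a b : L, θ (a ⊓ b) = θ a ⊓ θ b) (hsup : ∀ a b : L, θ (a ⊔ b) = θ a ⊔ θ b)
    (hfθ : ∀ a : Fin n → L, θ (fL a) = fM (fun i => θ (a i)))
    (hgθ : ∀ a : Fin m → L, θ (gL a) = gM (fun i => θ (a i))) :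
    -- `θ⁻¹` maps nonempty filters to nonempty filters and ideals to ideals
    (∀ F : Set M, IsLatFilter F → IsLatFilter (θ ⁻¹' F)) ∧
    (∀ D : Set M, IsLatIdeal D → IsLatIdeal (θ ⁻¹' D)) ∧
    ∃ (αθ : Filt M → Filt L) (βθ : Idl M → Idl L),
      (∀ F : Filt M, (αθ F).val = θ ⁻¹' F.val) ∧
      (∀ D : Idl M, (βθ D).val = θ ⁻¹' D.val) ∧
      -- `θ₊` is a bounded morphism from `M₊` to `L₊`
      IsBddMorphism (canR (L := M)) (SL fM) (TL gM)
        (canR (L := L)) (SL fL) (TL gL) αθ βθ ∧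
      -- if `θ` is injective then `α_θ` and `β_θ` are surjective
      (Function.Injective θ → Function.Surjective αθ ∧ Function.Surjective βθ) ∧
      -- if `θ` is surjective then `α_θ`, `β_θ` are injective, `θ₊` preserves the
      -- relations, and `θ₊` is an isomorphism from `M₊` onto `im(θ₊)`
      (Function.Surjective θ →
        Function.Injective αθ ∧ Function.Injective βθ ∧
        (∀ (F : Filt M) (D : Idl M), canR F D → canR (αθ F) (βθ D)) ∧
        (∀ (Fs : Fin n → Filt M) (D : Idl M),
          SL fM Fs D → SL fL (fun i => αθ (Fs i)) (βθ D)) ∧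
        (∀ (F : Filt M) (Ds : Fin m → Idl M),
          TL gM F Ds → TL gL (αθ F) (fun i => βθ (Ds i))) ∧
        (IsBddMorphism (canR (L := M)) (SL fM) (TL gM)
            (imR (canR (L := L)) αθ βθ) (imS (SL fL) αθ βθ) (imT (TL gL) αθ βθ)
            (fun F => ⟨αθ F, Set.mem_range_self F⟩)
            (fun D => ⟨βθ D, Set.mem_range_self D⟩) ∧
          ∃ (α' : ↥(Set.range αθ) → Filt M) (β' : ↥(Set.range βθ) → Idl M),
            IsBddMorphism (imR (canR (L := L)) αθ βθ) (imS (SL fL) αθ βθ)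
              (imT (TL gL) αθ βθ) (canR (L := M)) (SL fM) (TL gM) α' β' ∧
            (∀ F : Filt M, α' ⟨αθ F, Set.mem_range_self F⟩ = F) ∧
            (∀ D : Idl M, β' ⟨βθ D, Set.mem_range_self D⟩ = D) ∧
            (∀ F' : ↥(Set.range αθ), αθ (α' F') = F'.val) ∧
            (∀ D' : ↥(Set.range βθ), βθ (β' D') = D'.val))) := by
  let θ' : BoundedLatticeHom L M :=
    { toFun := θ, map_sup' := hsup, map_inf' := hinf, map_top' := htop, map_bot' := hbot }
  refine ⟨fun _ hF => hF.preimage θ', fun _ hD => hD.preimage θ', Filt.comap θ', Idl.comap θ',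
    fun _ => rfl, fun _ => rfl,
    isBddMorphism_comap θ' (monotone_of_map_update_sup hfM_join)
      (monotone_of_map_update_inf hgM_meet) hfθ hgθ,
    fun hinj => ⟨Filt.comap_surjective θ' hinj, Idl.comap_surjective θ' hinj⟩,
    fun hsurj => ?_⟩
  have hR := canR_comap_iff θ' hsurj
  have hS := SL_comap_iff θ' hfθ hsurj
  have hT := TL_comap_iff θ' hgθ hsurj
  have hα := Filt.comap_injective θ' hsurj
  have hβ := Idl.comap_injective θ' hsurj
  exact ⟨hα, hβ, fun _ _ => (hR _ _).mpr, fun _ _ => (hS _ _).mpr, fun _ _ => (hT _ _).mpr,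
    isBddMorphism_rangeFactorization hR hS hT, Set.rangeSplitting _, Set.rangeSplitting _,
    isBddMorphism_rangeSplitting hR hS hT hα hβ, Set.rightInverse_rangeSplitting hα,
    Set.rightInverse_rangeSplitting hβ, Set.apply_rangeSplitting _, Set.apply_rangeSplitting _⟩

/-- The dual `θ₊ = (α_θ, β_θ)` of a homomorphism `θ` of bounded lattices with a normal
operator and a normal dual operator is a bounded morphism between the canonical
structures; it is surjective in both components when `θ` is injective, and, when `θ` is
surjective, injective in both components, relation-preserving, and an isomorphism onto
the inner substructure `im(θ₊)`. -/
theorem stmt17 {L M : Type*} [Lattice L] [BoundedOrder L] [Lattice M] [BoundedOrder M]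
    {n m : ℕ}
    (fL : (Fin n → L) → L) (fM : (Fin n → M) → M)
    (gL : (Fin m → L) → L) (gM : (Fin m → M) → M)
    -- normal operators
    (hfL_join : ∀ (i : Fin n) (a : Fin n → L) (b c : L),
      fL (Function.update a i (b ⊔ c)) =
        fL (Function.update a i b) ⊔ fL (Function.update a i c))
    (hfL_bot : ∀ (i : Fin n) (a : Fin n → L), fL (Function.update a i ⊥) = ⊥)
    (hfM_join : ∀ (i : Fin n) (a : Fin n → M) (b c : M),
      fM (Function.update a i (b ⊔ c)) =
        fM (Function.update a i b) ⊔ fM (Function.update a i c))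
    (hfM_bot : ∀ (i : Fin n) (a : Fin n → M), fM (Function.update a i ⊥) = ⊥)
    -- normal dual operators
    (hgL_meet : ∀ (i : Fin m) (a : Fin m → L) (b c : L),
      gL (Function.update a i (b ⊓ c)) =
        gL (Function.update a i b) ⊓ gL (Function.update a i c))
    (hgL_top : ∀ (i : Fin m) (a : Fin m → L), gL (Function.update a i ⊤) = ⊤)
    (hgM_meet : ∀ (i : Fin m) (a : Fin m → M) (b c : M),
      gM (Function.update a i (b ⊓ c)) =
        gM (Function.update a i b) ⊓ gM (Function.update a i c))
    (hgM_top : ∀ (i : Fin m) (a : Fin m → M), gM (Function.update a i ⊤) = ⊤)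
    -- `θ` is a homomorphism of bounded lattices with operators
    (θ : L → M) (hbot : θ ⊥ = ⊥) (htop : θ ⊤ = ⊤)
    (hinf : ∀ a b : L, θ (a ⊓ b) = θ a ⊓ θ b) (hsup : ∀ a b : L, θ (a ⊔ b) = θ a ⊔ θ b)
    (hfθ : ∀ a : Fin n → L, θ (fL a) = fM (fun i => θ (a i)))
    (hgθ : ∀ a : Fin m → L, θ (gL a) = gM (fun i => θ (a i))) :
    -- `θ⁻¹` maps nonempty filters to nonempty filters and ideals to ideals
    (∀ F : Set M, IsLatFilter F → IsLatFilter (θ ⁻¹' F)) ∧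
    (∀ D : Set M, IsLatIdeal D → IsLatIdeal (θ ⁻¹' D)) ∧
    ∃ (αθ : Filt M → Filt L) (βθ : Idl M → Idl L),
      (∀ F : Filt M, (αθ F).val = θ ⁻¹' F.val) ∧
      (∀ D : Idl M, (βθ D).val = θ ⁻¹' D.val) ∧
      -- `θ₊` is a bounded morphism from `M₊` to `L₊`
      IsBddMorphism (canR (L := M)) (SL fM) (TL gM)
        (canR (L := L)) (SL fL) (TL gL) αθ βθ ∧
      -- if `θ` is injective then `α_θ` and `β_θ` are surjective
      (Function.Injective θ → Function.Surjective αθ ∧ Function.Surjective βθ) ∧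
      -- if `θ` is surjective then `α_θ`, `β_θ` are injective, `θ₊` preserves the
      -- relations, and `θ₊` is an isomorphism from `M₊` onto `im(θ₊)`
      (Function.Surjective θ →
        Function.Injective αθ ∧ Function.Injective βθ ∧
        (∀ (F : Filt M) (D : Idl M), canR F D → canR (αθ F) (βθ D)) ∧
        (∀ (Fs : Fin n → Filt M) (D : Idl M),
          SL fM Fs D → SL fL (fun i => αθ (Fs i)) (βθ D)) ∧
        (∀ (F : Filt M) (Ds : Fin m → Idl M),
          TL gM F Ds → TL gL (αθ F) (fun i => βθ (Ds i))) ∧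
        (IsBddMorphism (canR (L := M)) (SL fM) (TL gM)
            (imR (canR (L := L)) αθ βθ) (imS (SL fL) αθ βθ) (imT (TL gL) αθ βθ)
            (fun F => ⟨αθ F, Set.mem_range_self F⟩)
            (fun D => ⟨βθ D, Set.mem_range_self D⟩) ∧
          ∃ (α' : ↥(Set.range αθ) → Filt M) (β' : ↥(Set.range βθ) → Idl M),
            IsBddMorphism (imR (canR (L := L)) αθ βθ) (imS (SL fL) αθ βθ)
              (imT (TL gL) αθ βθ) (canR (L := M)) (SL fM) (TL gM) α' β' ∧
            (∀ F : Filt M, α' ⟨αθ F, Set.mem_range_self F⟩ = F) ∧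
            (∀ D : Idl M, β' ⟨βθ D, Set.mem_range_self D⟩ = D) ∧
            (∀ F' : ↥(Set.range αθ), αθ (α' F') = F'.val) ∧
            (∀ D' : ↥(Set.range βθ), βθ (β' D') = D'.val))) :=
  stmt17_general fL fM gL gM hfM_join hgM_meet θ hbot htop hinf hsup hfθ hgθ
end
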